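/- arXiv:1408.1851 — 7 statements merged into one kernel-verified Lean document; each statement's English description precedes it below -/
import Mathlib

section
/- Let s be a natural number and let u, v : Fin s → ℝ satisfy ⌊u i − u j⌋ = ⌊v i − v j⌋ for all indices i, j. Then for all indices i, j, k: Int.fract (u i − u k) < Int.fract (u j − u k) if and only if Int.fract (v i − v k) < Int.fract (v j − v k). -/
lemma fract_lt_iff_floor (a b : ℝ) :
    Int.fract a < Int.fract b ↔ ⌊a - b⌋ < ⌊a⌋ - ⌊b⌋ := by
  have hab : a - b = (Int.fract a - Int.fract b) + ((⌊a⌋ - ⌊b⌋ : ℤ) : ℝ) := by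
    push_cast; unfold Int.fract; ring
  rw [hab, Int.floor_add_intCast]
  have : ⌊Int.fract a - Int.fract b⌋ + (⌊a⌋ - ⌊b⌋) < ⌊a⌋ - ⌊b⌋ ↔
      ⌊Int.fract a - Int.fract b⌋ < 0 := by omega
  rw [this, Int.floor_lt]
  push_cast
  constructor <;> intro h' <;> linarith

theorem relative_frac (s : ℕ) (u v : Fin s → ℝ)
    (h : ∀ i j : Fin s, ⌊u i - u j⌋ = ⌊v i - v j⌋) :
    ∀ i j k : Fin s,
      (Int.fract (u i - u k) < Int.fract (u j - u k) ↔
        Int.fract (v i - v k) < Int.fract (v j - v k)) := by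
  intro i j k
  rw [fract_lt_iff_floor, fract_lt_iff_floor]
  have h1 : u i - u k - (u j - u k) = u i - u j := by ring
  have h2 : v i - v k - (v j - v k) = v i - v j := by ring
  rw [h1, h2, h i j, h i k, h j k]
end

section
/- Let s be a natural number and let u : Fin s → ℝ be a tuple such that the map i ↦ Int.fract (u i − u 0) is monotone in i. Then for all indices i ≤ m ≤ j: Int.fract (u j − u i) = Int.fract (u j − u m) + Int.fract (u m − u i), and ⌊u j − u i⌋ = ⌊u j − u m⌋ + ⌊u m − u i⌋. -/
theorem split_identity (s : ℕ) [NeZero s] (u : Fin s → ℝ)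
    (hmono : Monotone (fun i : Fin s => Int.fract (u i - u 0))) :
    ∀ i m j : Fin s, i ≤ m → m ≤ j →
      Int.fract (u j - u i) = Int.fract (u j - u m) + Int.fract (u m - u i) ∧
      ⌊u j - u i⌋ = ⌊u j - u m⌋ + ⌊u m - u i⌋ := by
  have key : ∀ i m : Fin s, i ≤ m →
      Int.fract (u m - u i) = Int.fract (u m - u 0) - Int.fract (u i - u 0) := by
    intro i m h
    have h1 : Int.fract (u i - u 0) ≤ Int.fract (u m - u 0) := hmono h
    have heq : u m - u i = (Int.fract (u m - u 0) - Int.fract (u i - u 0)) +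
        ((⌊u m - u 0⌋ - ⌊u i - u 0⌋ : ℤ) : ℝ) := by
      rw [Int.fract, Int.fract]; push_cast; ring
    rw [heq, Int.fract_add_intCast]
    exact Int.fract_eq_self.2 ⟨sub_nonneg.2 h1,
      by linarith [Int.fract_lt_one (u m - u 0), Int.fract_nonneg (u i - u 0)]⟩
  intro i m j him hmj
  have hij : i ≤ j := le_trans him hmj
  have hfr : Int.fract (u j - u i) = Int.fract (u j - u m) + Int.fract (u m - u i) := by
    rw [key i m him, key m j hmj, key i j hij]; ring
  refine ⟨hfr, ?_⟩
  have h1 := Int.self_sub_fract (u j - u i)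
  have h2 := Int.self_sub_fract (u j - u m)
  have h3 := Int.self_sub_fract (u m - u i)
  have : (⌊u j - u i⌋ : ℝ) = (⌊u j - u m⌋ : ℝ) + (⌊u m - u i⌋ : ℝ) := by linarith
  exact_mod_cast this
end

section
/- Let s be a natural number, let u, v : Fin s → ℝ be tuples both in increasing order, and let m : Fin s. Suppose ⌊u i − u j⌋ = ⌊v i − v j⌋ holds for all indices i, j ≤ m, and also for all indices i, j ≥ m. Then ⌊u i − u j⌋ = ⌊v i − v j⌋ for all indices i, j in Fin s. -/
lemma fract_sub_fract' (a b : ℝ) :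
    Int.fract (a - b) = Int.fract (Int.fract a - Int.fract b) := by
  have h : Int.fract a - Int.fract b = (a - b) + ((⌊b⌋ - ⌊a⌋ : ℤ) : ℝ) := by
    simp only [Int.fract]; push_cast; ring
  rw [h, Int.fract_add_intCast]

lemma floor_add_fract' (x y : ℝ) :
    ⌊x + y⌋ = ⌊x⌋ + ⌊y⌋ + ⌊Int.fract x + Int.fract y⌋ := by
  have h : x + y = (Int.fract x + Int.fract y) + ((⌊x⌋ + ⌊y⌋ : ℤ) : ℝ) := by
    simp only [Int.fract]; push_cast; ring
  rw [h, Int.floor_add_intCast]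
  ring

lemma fract_sub_of_ge (a b : ℝ) (h : Int.fract b ≤ Int.fract a) :
    Int.fract (a - b) = Int.fract a - Int.fract b := by
  rw [fract_sub_fract', Int.fract_eq_self.mpr]
  constructor
  · linarith
  · have := Int.fract_lt_one a
    have := Int.fract_nonneg b
    linarith

lemma fract_sub_of_lt (a b : ℝ) (h : Int.fract a < Int.fract b) :
    Int.fract (a - b) = Int.fract a - Int.fract b + 1 := by
  rw [fract_sub_fract']
  have hf : ⌊Int.fract a - Int.fract b⌋ = -1 := by
    rw [Int.floor_eq_iff]
    have := Int.fract_lt_one b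
    have := Int.fract_nonneg a
    constructor
    · push_cast; linarith
    · push_cast; linarith
  rw [Int.fract, hf]
  push_cast; ring

lemma fract_sub_eq_zero_iff (a b : ℝ) (h : Int.fract a ≤ Int.fract b) :
    Int.fract (a - b) = 0 ↔ Int.fract a = Int.fract b := by
  rcases eq_or_lt_of_le h with heq | hlt
  · rw [fract_sub_of_ge a b heq.ge]
    constructor <;> intro <;> linarith
  · rw [fract_sub_of_lt a b hlt]
    have := Int.fract_nonneg a
    have := Int.fract_lt_one b
    constructor
    · intro he; exfalso; linarith
    · intro he; linarith

lemma key2 (a b c : ℝ) (h1 : Int.fract b ≤ Int.fract a) (h2 : Int.fract c ≤ Int.fract b) :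
    ⌊a - c⌋ = ⌊a - b⌋ + ⌊b - c⌋ := by
  rw [show a - c = (a - b) + (b - c) by ring, floor_add_fract',
    fract_sub_of_ge a b h1, fract_sub_of_ge b c h2]
  have h3 : ⌊Int.fract a - Int.fract b + (Int.fract b - Int.fract c)⌋ = 0 := by
    rw [Int.floor_eq_zero_iff, Set.mem_Ico]
    have := Int.fract_lt_one a
    have := Int.fract_nonneg c
    exact ⟨by linarith, by linarith⟩
  rw [h3, add_zero]

lemma key1 (a b c : ℝ) (h1 : Int.fract a ≤ Int.fract b) (h2 : Int.fract b ≤ Int.fract c) :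
    ⌊a - c⌋ = ⌊a - b⌋ + ⌊b - c⌋ +
      (if Int.fract (a - b) = 0 ∨ Int.fract (b - c) = 0 then 0 else 1) := by
  rw [show a - c = (a - b) + (b - c) by ring, floor_add_fract']
  congr 1
  have hna := Int.fract_nonneg a
  have hnb := Int.fract_nonneg b
  have hnc := Int.fract_nonneg c
  have hla := Int.fract_lt_one a
  have hlb := Int.fract_lt_one b
  have hlc := Int.fract_lt_one c
  split_ifs with h
  · rcases h with h | h
    · rw [h, zero_add, Int.floor_eq_zero_iff, Set.mem_Ico]
      exact ⟨Int.fract_nonneg _, Int.fract_lt_one _⟩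
    · rw [h, add_zero, Int.floor_eq_zero_iff, Set.mem_Ico]
      exact ⟨Int.fract_nonneg _, Int.fract_lt_one _⟩
  · push_neg at h
    obtain ⟨hab, hbc⟩ := h
    have hab' : Int.fract a < Int.fract b :=
      lt_of_le_of_ne h1 (fun he => hab ((fract_sub_eq_zero_iff a b h1).mpr he))
    have hbc' : Int.fract b < Int.fract c :=
      lt_of_le_of_ne h2 (fun he => hbc ((fract_sub_eq_zero_iff b c h2).mpr he))
    rw [fract_sub_of_lt a b hab', fract_sub_of_lt b c hbc']
    rw [Int.floor_eq_iff]
    constructor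
    · push_cast; linarith
    · push_cast; linarith

lemma fract_zero_iff_floor (x : ℝ) : Int.fract x = 0 ↔ ⌊x⌋ + ⌊-x⌋ = 0 := by
  constructor
  · intro h
    have hx : x = ((⌊x⌋ : ℤ) : ℝ) := by
      have := Int.fract_add_floor x; rw [h, zero_add] at this; exact this.symm
    rw [hx, ← Int.cast_neg, Int.floor_intCast, Int.floor_intCast]
    ring
  · intro h
    by_contra hne
    have h1 : 0 < Int.fract x := lt_of_le_of_ne (Int.fract_nonneg x) (Ne.symm hne)
    have h2 := Int.fract_lt_one x
    have hx : -x = ((-⌊x⌋ - 1 : ℤ) : ℝ) + (1 - Int.fract x) := by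
      have := Int.fract_add_floor x
      push_cast
      linarith
    have h3 : ⌊(1 : ℝ) - Int.fract x⌋ = 0 := by
      rw [Int.floor_eq_zero_iff, Set.mem_Ico]
      exact ⟨by linarith, by linarith⟩
    have : ⌊-x⌋ = -⌊x⌋ - 1 := by
      rw [hx, Int.floor_intCast_add, h3, add_zero]
    omega

theorem equiv_composition (s : ℕ) [NeZero s] (u v : Fin s → ℝ) (m : Fin s)
    (hu : Monotone (fun i : Fin s => Int.fract (u i - u 0)))
    (hv : Monotone (fun i : Fin s => Int.fract (v i - v 0)))
    (hle : ∀ i j : Fin s, i ≤ m → j ≤ m → ⌊u i - u j⌋ = ⌊v i - v j⌋)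
    (hge : ∀ i j : Fin s, m ≤ i → m ≤ j → ⌊u i - u j⌋ = ⌊v i - v j⌋) :
    ∀ i j : Fin s, ⌊u i - u j⌋ = ⌊v i - v j⌋ := by
  intro i j
  rcases le_total i m with him | hmi <;> rcases le_total j m with hjm | hmj
  · exact hle i j him hjm
  · -- i ≤ m ≤ j
    have ku := key1 (u i - u 0) (u m - u 0) (u j - u 0) (hu him) (hu hmj)
    have kv := key1 (v i - v 0) (v m - v 0) (v j - v 0) (hv him) (hv hmj)
    simp only [sub_sub_sub_cancel_right] at ku kv
    have t1 : (Int.fract (u i - u m) = 0) ↔ (Int.fract (v i - v m) = 0) := by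
      rw [fract_zero_iff_floor, fract_zero_iff_floor, hle i m him le_rfl,
        neg_sub, neg_sub, hle m i le_rfl him]
    have t2 : (Int.fract (u m - u j) = 0) ↔ (Int.fract (v m - v j) = 0) := by
      rw [fract_zero_iff_floor, fract_zero_iff_floor, hge m j le_rfl hmj,
        neg_sub, neg_sub, hge j m hmj le_rfl]
    rw [ku, kv, hle i m him le_rfl, hge m j le_rfl hmj]
    congr 1
    exact if_congr (or_congr t1 t2) rfl rfl
  · -- j ≤ m ≤ i
    have ku := key2 (u i - u 0) (u m - u 0) (u j - u 0) (hu hmi) (hu hjm)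
    have kv := key2 (v i - v 0) (v m - v 0) (v j - v 0) (hv hmi) (hv hjm)
    simp only [sub_sub_sub_cancel_right] at ku kv
    rw [ku, kv, hge i m hmi le_rfl, hle m j le_rfl hjm]
  · exact hge i j hmi hmj
end

section
/- Let s be a natural number and let u, v : Fin s → ℝ satisfy ⌊u i − u j⌋ = ⌊v i − v j⌋ for all indices i, j. Then for all indices i, j: u i < u j if and only if v i < v j; u i = u j if and only if v i = v j; and u i = u j + 1 if and only if v i = v j + 1. -/
lemma lt_iff_floor (a b : ℝ) : a < b ↔ ⌊a - b⌋ < 0 := by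
  rw [Int.floor_lt]
  push_cast
  constructor <;> intro h <;> linarith

lemma eq_iff_floor (a b : ℝ) : a = b ↔ (⌊a - b⌋ = 0 ∧ ⌊b - a⌋ = 0) := by
  constructor
  · rintro rfl; simp
  · rintro ⟨h1, h2⟩
    have := Int.floor_le (a - b)
    have := Int.floor_le (b - a)
    rw [h1] at *; rw [h2] at *
    push_cast at *
    linarith

lemma eq_add_one_iff_floor (a b : ℝ) : a = b + 1 ↔ (⌊a - b⌋ = 1 ∧ ⌊b - a⌋ = -1) := by
  constructor
  · rintro rfl
    constructor
    · norm_num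
    · have : b - (b + 1) = -1 := by ring
      rw [this]; exact_mod_cast Int.floor_intCast (-1)
  · rintro ⟨h1, h2⟩
    have ha := Int.floor_le (a - b)
    have hb := Int.floor_le (b - a)
    rw [h1] at ha; rw [h2] at hb
    push_cast at ha hb
    linarith

theorem equiv_partial_iso (s : ℕ) (u v : Fin s → ℝ)
    (h : ∀ i j : Fin s, ⌊u i - u j⌋ = ⌊v i - v j⌋) :
    ∀ i j : Fin s,
      (u i < u j ↔ v i < v j) ∧
      (u i = u j ↔ v i = v j) ∧
      (u i = u j + 1 ↔ v i = v j + 1) := by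
  intro i j
  refine ⟨?_, ?_, ?_⟩
  · rw [lt_iff_floor, lt_iff_floor, h i j]
  · rw [eq_iff_floor, eq_iff_floor (v i), h i j, h j i]
  · rw [eq_add_one_iff_floor, eq_add_one_iff_floor (v i), h i j, h j i]
end

section
/- Let a, b : ℝ with 0 < a and a ≠ 1, let x* = b / (1 − a), and define Φ₀ : ℝ → ℝ by Φ₀ x = −Real.log (x* − x). Then Φ₀ is strictly monotone on the interval (−∞, x*), the image of (−∞, x*) under Φ₀ is all of ℝ, and for every x < x* one has Φ₀ (a * x + b) = Φ₀ x − Real.log a. -/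
/-! The map `x ↦ x* - x` sends `(-∞, x*)` onto `(0, ∞)` reversing order, and `-log` is an
order-reversing bijection of `(0, ∞)` onto `ℝ`. Since `x*` is the fixed point of `f`, the
distance to it scales linearly, `x* - f x = a (x* - x)`, so `-log` of that distance is
shifted by the constant `-log a`. -/

open Real Set

theorem strictMonoOn_neg_log_const_sub (c : ℝ) :
    StrictMonoOn (fun x : ℝ => -log (c - x)) (Iio c) :=
  StrictAntiOn.neg (f := log ∘ (c - ·)) <|
    strictMonoOn_log.comp_strictAntiOn (fun _ _ _ _ hxy => sub_lt_sub_left hxy c)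
      fun _ hx => sub_pos.2 (mem_Iio.1 hx)

theorem image_neg_log_const_sub_Iio (c : ℝ) :
    (fun x : ℝ => -log (c - x)) '' Iio c = univ := by
  refine eq_univ_of_forall fun y => ⟨c - exp (-y), ?_, ?_⟩
  · simp only [mem_Iio, sub_lt_self_iff, exp_pos]
  · simp only [sub_sub_cancel, log_exp, neg_neg]

theorem div_one_sub_sub_affine {a : ℝ} (b x : ℝ) (ha1 : a ≠ 1) :
    b / (1 - a) - (a * x + b) = a * (b / (1 - a) - x) := by
  have h : 1 - a ≠ 0 := sub_ne_zero.2 ha1.symm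
  field_simp
  ring

theorem phi0_iso (a b : ℝ) (ha : 0 < a) (ha1 : a ≠ 1) :
    StrictMonoOn (fun x : ℝ => -Real.log (b / (1 - a) - x)) (Set.Iio (b / (1 - a))) ∧
    (fun x : ℝ => -Real.log (b / (1 - a) - x)) '' Set.Iio (b / (1 - a)) = Set.univ ∧
    ∀ x : ℝ, x < b / (1 - a) →
      -Real.log (b / (1 - a) - (a * x + b)) = -Real.log (b / (1 - a) - x) - Real.log a := by
  refine ⟨strictMonoOn_neg_log_const_sub _, image_neg_log_const_sub_Iio _, fun x hx => ?_⟩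
  rw [div_one_sub_sub_affine b x ha1, log_mul ha.ne' (sub_pos.2 hx).ne']
  ring
end

section
/- Consider lists of integers ordered by the lexicographic order on List ℤ. For all lists s, t : List ℤ with s ≠ [], t ≠ [], and s < t in the lexicographic order, and for every integer z, there exists a list w : List ℤ with w ≠ [], s < w, w < t, and whose last entry is z (i.e. w.getLast? = some z). -/
lemma lex_prefix_lt {r : ℤ → ℤ → Prop} (l : List ℤ) (x : ℤ) (u : List ℤ) :
    List.Lex r l (l ++ x :: u) := by
  induction l with
  | nil => exact List.Lex.nil
  | cons a l ih => exact List.Lex.cons ih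

lemma lex_key (s t : List ℤ) (h : List.Lex (· < ·) s t) (z : ℤ) :
    ∃ w : List ℤ, w ≠ [] ∧ List.Lex (· < ·) s w ∧ List.Lex (· < ·) w t ∧
      w.getLast? = some z := by
  induction h with
  | nil =>
    rename_i b t'
    exact ⟨[b - 1, z], by simp, List.Lex.nil, List.Lex.rel (by omega), rfl⟩
  | @rel a s' b t' hab =>
    refine ⟨a :: (s' ++ [z]), by simp, List.Lex.cons ?_, List.Lex.rel hab, ?_⟩
    · exact lex_prefix_lt s' z []
    · rw [show a :: (s' ++ [z]) = (a :: s') ++ [z] by simp, List.getLast?_concat]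
  | @cons a s' t' h' ih =>
    obtain ⟨w, hw, h1, h2, h3⟩ := ih
    refine ⟨a :: w, by simp, List.Lex.cons h1, List.Lex.cons h2, ?_⟩
    cases w with
    | nil => exact absurd rfl hw
    | cons b w' => simpa using h3

theorem lex_interval_contains_last (s t : List ℤ) (hs : s ≠ []) (ht : t ≠ [])
    (hst : s < t) (z : ℤ) :
    ∃ w : List ℤ, w ≠ [] ∧ s < w ∧ w < t ∧ w.getLast? = some z := by
  obtain ⟨w, hw, h1, h2, h3⟩ := lex_key s t hst z
  exact ⟨w, hw, h1, h2, h3⟩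
end

section
/- The set S = {l : List ℤ // l ≠ []} of non-empty finite sequences of integers, linearly ordered by the lexicographic order inherited from List ℤ, is densely ordered and has no greatest and no least element: for all s < t in S there exists w in S with s < w < t, for every s in S there exists t in S with t < s, and for every s in S there exists t in S with s < t. -/
private lemma lex_prefix_cons {l : List ℤ} (x : ℤ) (u : List ℤ) :
    List.Lex (· < ·) l (l ++ x :: u) := by
  induction l with
  | nil => exact List.Lex.nil
  | cons a l ih => exact List.Lex.cons ih

private lemma dense_aux : ∀ s t : List ℤ, List.Lex (· < ·) s t →
    ∃ w : List ℤ, w ≠ [] ∧ List.Lex (· < ·) s w ∧ List.Lex (· < ·) w t := by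
  intro s t h
  induction h with
  | nil =>
    rename_i b bs
    exact ⟨[b - 1], by simp, List.Lex.nil, List.Lex.rel (by omega)⟩
  | @cons a as bs _ ih =>
    obtain ⟨w, hw, h1, h2⟩ := ih
    exact ⟨a :: w, by simp, List.Lex.cons h1, List.Lex.cons h2⟩
  | @rel a as b bs hab =>
    exact ⟨a :: (as ++ [0]), by simp, List.Lex.cons (lex_prefix_cons 0 []),
      List.Lex.rel hab⟩

private lemma mk_lt_iff {s t : List ℤ} {hs : s ≠ []} {ht : t ≠ []} :
    (⟨s, hs⟩ : {l : List ℤ // l ≠ []}) < ⟨t, ht⟩ ↔ List.Lex (· < ·) s t :=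
  Subtype.mk_lt_mk

theorem nonempty_int_lists_dense_unbounded :
    (∀ s t : {l : List ℤ // l ≠ []}, s < t → ∃ w : {l : List ℤ // l ≠ []}, s < w ∧ w < t) ∧
    (∀ s : {l : List ℤ // l ≠ []}, ∃ t : {l : List ℤ // l ≠ []}, t < s) ∧
    (∀ s : {l : List ℤ // l ≠ []}, ∃ t : {l : List ℤ // l ≠ []}, s < t) := by
  refine ⟨?_, ?_, ?_⟩
  · rintro ⟨s, hs⟩ ⟨t, ht⟩ h
    have h' : List.Lex (· < ·) s t := mk_lt_iff.mp h
    obtain ⟨w, hw, h1, h2⟩ := dense_aux s t h'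
    exact ⟨⟨w, hw⟩, mk_lt_iff.mpr h1, mk_lt_iff.mpr h2⟩
  · rintro ⟨s, hs⟩
    obtain ⟨a, l, rfl⟩ := List.exists_cons_of_ne_nil hs
    exact ⟨⟨[a - 1], by simp⟩, mk_lt_iff.mpr (List.Lex.rel (by omega))⟩
  · rintro ⟨s, hs⟩
    obtain ⟨a, l, rfl⟩ := List.exists_cons_of_ne_nil hs
    exact ⟨⟨[a + 1], by simp⟩, mk_lt_iff.mpr (List.Lex.rel (by omega))⟩
end
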